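/- Assume L satisfies Hypothesis 1.1. The operator N(λ)𝓡 − i is invertible on H^{1/2}(∂Ω) if and only if λ ∈ ρ(L^N) ∩ ρ(L^{i𝓡}), and the function 𝐖₀(λ) := (N(λ)𝓡 + i)(N(λ)𝓡 − i)^{−1}, analytic on ρ(L^N) ∩ ρ(L^{i𝓡}), satisfies 𝐖₀(λ) = 2i N_{i𝓡}(λ)𝓡 − I and hence extends analytically to all of ρ(L^{i𝓡}). Moreover, for any Θ satisfying Hypothesis 4.4 the continuation 𝐖 satisfies 𝐖(λ) = −𝓡^{−1} R_{Θ,−i𝓡}(λ) R_{i𝓡,Θ}(λ) 𝓡 = 2i N_Θ(λ) R_{i𝓡,Θ}(λ) 𝓡 − I for all λ ∈ ρ(L^{i𝓡}) ∩ ρ(L^Θ). -/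

import Mathlib

/-!
Theorem 7.1 (the complex Souriau map and its analytic continuation).
Abstraction: `sol z` is the set of weak solutions of `Lu = zu` in `H¹(Ω)`,
`pr` the duality pairing, `𝓡` the Riesz isomorphism
`H^{1/2}(∂Ω) → H^{-1/2}(∂Ω)`, resolvent membership is expressed via unique
solvability, and the Robin-to-Dirichlet / Robin-to-Robin families are
characterized by their defining properties and are analytic on the
corresponding resolvent sets.  `(N(λ)𝓡 - i)⁻¹` is expressed via
`Ring.inverse`.
-/

open Complex Topology Filter Set

noncomputable section
namespace Evans

variable {Hb Hb' : Type*} [NormedAddCommGroup Hb] [InnerProductSpace ℂ Hb] [CompleteSpace Hb]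
  [NormedAddCommGroup Hb'] [NormedSpace ℂ Hb']
variable {H1 : Type*} [AddCommGroup H1] [Module ℂ H1]

/-- unique solvability of the Robin problem, i.e. `z ∈ ρ(𝓛^Θ)`. -/
def RobinRegular (sol : ℂ → Set H1) (γD : H1 →ₗ[ℂ] Hb) (γN : H1 →ₗ[ℂ] Hb')
    (Θ : Hb →L[ℂ] Hb') (z : ℂ) : Prop :=
  ∀ g : Hb', ∃! u, u ∈ sol z ∧ γN u + Θ (γD u) = g

/-- `N` is the Robin-to-Dirichlet map `N_Θ(z)`. -/
def IsRtD (sol : ℂ → Set H1) (γD : H1 →ₗ[ℂ] Hb) (γN : H1 →ₗ[ℂ] Hb')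
    (Θ : Hb →L[ℂ] Hb') (N : Hb' →L[ℂ] Hb) (z : ℂ) : Prop :=
  ∀ g : Hb', ∃ u, u ∈ sol z ∧ γN u + Θ (γD u) = g ∧ N g = γD u

/-- `R` is the Robin-to-Robin map `R_{Θ₁,Θ₂}(z)`. -/
def IsRtR (sol : ℂ → Set H1) (γD : H1 →ₗ[ℂ] Hb) (γN : H1 →ₗ[ℂ] Hb')
    (Θ₁ Θ₂ : Hb →L[ℂ] Hb') (R : Hb' →L[ℂ] Hb') (z : ℂ) : Prop :=
  ∀ g : Hb', ∃ u, u ∈ sol z ∧ γN u + Θ₁ (γD u) = g ∧ R g = γN u + Θ₂ (γD u)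

/-! For a solution `u` put `P u = 𝓡⁻¹ γN u + i γD u` and `Q u = 𝓡⁻¹ γN u - i γD u`, so that
`𝓡 P u` and `𝓡 Q u` are the Robin data of `u` for `±i𝓡`. Then `(N𝓡 - i) (𝓡⁻¹ γN u) = -i P u`,
`(N𝓡 + i) (𝓡⁻¹ γN u) = i Q u` and `(2i N_{i𝓡} 𝓡 - 1) (P u) = -Q u`: `2i N_{i𝓡} 𝓡 - 1` is the
Cayley transform of `N𝓡`. The first identity factors `N𝓡 - i` through the `i𝓡`-Robin data map,
which gives the invertibility criterion, and the operator identities are checked on the vectors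
`𝓡⁻¹ γN u`, resp. `P u`, which exhaust `H^{1/2}(∂Ω)` on `ρ(L^N)`, resp. `ρ(L^{i𝓡})`. -/

section

omit [CompleteSpace Hb]

variable {sol : ℂ → Set H1} {γD : H1 →ₗ[ℂ] Hb} {γN : H1 →ₗ[ℂ] Hb'} {z : ℂ}

theorem robinRegular_iff_bijective {Θ : Hb →L[ℂ] Hb'} :
    RobinRegular sol γD γN Θ z ↔
      Function.Bijective ((sol z).domRestrict fun u => γN u + Θ (γD u)) := by
  rw [Function.bijective_iff_existsUnique]
  exact forall_congr' fun g =>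
    ⟨fun ⟨u, ⟨hu, hg⟩, huniq⟩ => ⟨⟨u, hu⟩, hg, fun v hv => Subtype.ext (huniq v ⟨v.2, hv⟩)⟩,
     fun ⟨u, hg, huniq⟩ =>
      ⟨u, ⟨u.2, hg⟩, fun v ⟨hv, hvg⟩ => congrArg Subtype.val (huniq ⟨v, hv⟩ hvg)⟩⟩

theorem RobinRegular.eq_of_robinData_eq {Θ : Hb →L[ℂ] Hb'} (hreg : RobinRegular sol γD γN Θ z)
    {u v : H1} (hu : u ∈ sol z) (hv : v ∈ sol z) (h : γN u + Θ (γD u) = γN v + Θ (γD v)) :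
    u = v :=
  (hreg _).unique ⟨hu, h⟩ ⟨hv, rfl⟩

theorem RobinRegular.exists_symm_robinData_eq {Θ : Hb →L[ℂ] Hb'}
    (hreg : RobinRegular sol γD γN Θ z) (𝓡 : Hb ≃L[ℂ] Hb') (x : Hb) :
    ∃ u ∈ sol z, 𝓡.symm (γN u + Θ (γD u)) = x := by
  obtain ⟨u, ⟨hu, hux⟩, -⟩ := hreg (𝓡 x)
  exact ⟨u, hu, by rw [hux, 𝓡.symm_apply_apply]⟩

theorem RobinRegular.clm_ext {F : Type*} [NormedAddCommGroup F] [NormedSpace ℂ F]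
    {Θ : Hb →L[ℂ] Hb'} (hreg : RobinRegular sol γD γN Θ z) {T S : Hb' →L[ℂ] F}
    (h : ∀ u ∈ sol z, T (γN u + Θ (γD u)) = S (γN u + Θ (γD u))) : T = S := by
  ext g
  obtain ⟨u, ⟨hu, rfl⟩, -⟩ := hreg g
  exact h u hu

theorem IsRtD.apply_robinData {Θ : Hb →L[ℂ] Hb'} {M : Hb' →L[ℂ] Hb}
    (hM : IsRtD sol γD γN Θ M z) (hreg : RobinRegular sol γD γN Θ z) {u : H1} (hu : u ∈ sol z) :
    M (γN u + Θ (γD u)) = γD u := by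
  obtain ⟨v, hv, hvu, hMv⟩ := hM (γN u + Θ (γD u))
  rw [hMv, hreg.eq_of_robinData_eq hv hu hvu]

theorem IsRtR.apply_robinData {Θ₁ Θ₂ : Hb →L[ℂ] Hb'} {R : Hb' →L[ℂ] Hb'}
    (hR : IsRtR sol γD γN Θ₁ Θ₂ R z) (hreg : RobinRegular sol γD γN Θ₁ z) {u : H1}
    (hu : u ∈ sol z) : R (γN u + Θ₁ (γD u)) = γN u + Θ₂ (γD u) := by
  obtain ⟨v, hv, hvu, hRv⟩ := hR (γN u + Θ₁ (γD u))
  rw [hRv, hreg.eq_of_robinData_eq hv hu hvu]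

theorem IsRtD.eq_comp_robinToRobin {Θ₁ Θ₂ : Hb →L[ℂ] Hb'} {N₁ N₂ : Hb' →L[ℂ] Hb}
    {R : Hb' →L[ℂ] Hb'} (hN₁ : IsRtD sol γD γN Θ₁ N₁ z) (hreg₁ : RobinRegular sol γD γN Θ₁ z)
    (hN₂ : IsRtD sol γD γN Θ₂ N₂ z) (hreg₂ : RobinRegular sol γD γN Θ₂ z)
    (hR : IsRtR sol γD γN Θ₁ Θ₂ R z) : N₁ = N₂.comp R :=
  hreg₁.clm_ext fun u hu => by
    rw [ContinuousLinearMap.comp_apply, hR.apply_robinData hreg₁ hu,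
      hN₁.apply_robinData hreg₁ hu, hN₂.apply_robinData hreg₂ hu]

variable (𝓡 : Hb ≃L[ℂ] Hb') {M : Hb' →L[ℂ] Hb} {u : H1}

theorem neumann_sub_I_apply (hM : IsRtD sol γD γN 0 M z) (hreg : RobinRegular sol γD γN 0 z)
    (hu : u ∈ sol z) :
    (M.comp (𝓡 : Hb →L[ℂ] Hb') - I • 1) (𝓡.symm (γN u)) =
      -I • 𝓡.symm (γN u + (I • (𝓡 : Hb →L[ℂ] Hb')) (γD u)) := by
  have hMu : M (γN u) = γD u := by simpa using hM.apply_robinData hreg hu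
  simp only [sub_apply, smul_apply, one_apply_eq_self, ContinuousLinearMap.comp_apply,
    ContinuousLinearEquiv.coe_coe, map_add, map_smul, ContinuousLinearEquiv.apply_symm_apply,
    ContinuousLinearEquiv.symm_apply_apply, hMu]
  linear_combination (norm := module) I_mul_I • γD u

theorem neumann_add_I_apply (hM : IsRtD sol γD γN 0 M z) (hreg : RobinRegular sol γD γN 0 z)
    (hu : u ∈ sol z) :
    (M.comp (𝓡 : Hb →L[ℂ] Hb') + I • 1) (𝓡.symm (γN u)) =
      I • 𝓡.symm (γN u + (-(I • (𝓡 : Hb →L[ℂ] Hb'))) (γD u)) := by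
  have hMu : M (γN u) = γD u := by simpa using hM.apply_robinData hreg hu
  simp only [add_apply, smul_apply, neg_apply, one_apply_eq_self, ContinuousLinearMap.comp_apply,
    ContinuousLinearEquiv.coe_coe, map_add, map_neg, map_smul,
    ContinuousLinearEquiv.apply_symm_apply, ContinuousLinearEquiv.symm_apply_apply, hMu]
  linear_combination (norm := module) I_mul_I • γD u

theorem cayley_apply (hM : IsRtD sol γD γN (I • (𝓡 : Hb →L[ℂ] Hb')) M z)
    (hreg : RobinRegular sol γD γN (I • (𝓡 : Hb →L[ℂ] Hb')) z) (hu : u ∈ sol z) :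
    ((2 * I) • M.comp (𝓡 : Hb →L[ℂ] Hb') - 1)
        (𝓡.symm (γN u + (I • (𝓡 : Hb →L[ℂ] Hb')) (γD u))) =
      -𝓡.symm (γN u + (-(I • (𝓡 : Hb →L[ℂ] Hb'))) (γD u)) := by
  rw [sub_apply, smul_apply,
    ContinuousLinearMap.comp_apply, ContinuousLinearEquiv.coe_coe,
    ContinuousLinearEquiv.apply_symm_apply, hM.apply_robinData hreg hu,
    one_apply_eq_self]
  simp only [neg_apply, smul_apply, ContinuousLinearEquiv.coe_coe, map_add, map_neg, map_smul,
    ContinuousLinearEquiv.symm_apply_apply]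
  module

theorem bijective_neumann_sub_I_iff (hM : IsRtD sol γD γN 0 M z)
    (hreg : RobinRegular sol γD γN 0 z) :
    Function.Bijective ⇑(M.comp (𝓡 : Hb →L[ℂ] Hb') - I • (1 : Hb →L[ℂ] Hb)) ↔
      RobinRegular sol γD γN (I • (𝓡 : Hb →L[ℂ] Hb')) z := by
  let neumannData : sol z ≃ Hb' := Equiv.ofBijective _ (robinRegular_iff_bijective.1 hreg)
  let rotate : Hb' ≃ Hb :=
    𝓡.symm.toEquiv.trans (LinearEquiv.smulOfNeZero ℂ Hb (-I) (by simp)).toEquiv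
  have hfactor : ⇑(M.comp (𝓡 : Hb →L[ℂ] Hb') - I • (1 : Hb →L[ℂ] Hb)) =
      rotate ∘ (sol z).domRestrict (fun u => γN u + (I • (𝓡 : Hb →L[ℂ] Hb')) (γD u)) ∘
        (𝓡.toEquiv.trans neumannData.symm) := by
    funext x
    obtain ⟨u, hu, rfl⟩ := hreg.exists_symm_robinData_eq 𝓡 x
    simp only [zero_apply, add_zero]
    have hu' : (𝓡.toEquiv.trans neumannData.symm) (𝓡.symm (γN u)) = ⟨u, hu⟩ := by
      change neumannData.symm (𝓡 (𝓡.symm (γN u))) = _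
      rw [𝓡.apply_symm_apply, Equiv.symm_apply_eq]
      simp [neumannData]
    rw [Function.comp_apply, Function.comp_apply, hu', neumann_sub_I_apply 𝓡 hM hreg hu]
    rfl
  rw [hfactor, Equiv.comp_bijective, Equiv.bijective_comp, robinRegular_iff_bijective]

theorem cayley_mul_neumann_sub_I {N : Hb' →L[ℂ] Hb} (hM : IsRtD sol γD γN 0 M z)
    (hreg : RobinRegular sol γD γN 0 z) (hN : IsRtD sol γD γN (I • (𝓡 : Hb →L[ℂ] Hb')) N z)
    (hregI : RobinRegular sol γD γN (I • (𝓡 : Hb →L[ℂ] Hb')) z) :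
    ((2 * I) • N.comp (𝓡 : Hb →L[ℂ] Hb') - 1) * (M.comp (𝓡 : Hb →L[ℂ] Hb') - I • 1) =
      M.comp (𝓡 : Hb →L[ℂ] Hb') + I • 1 := by
  ext x
  obtain ⟨u, hu, rfl⟩ := hreg.exists_symm_robinData_eq 𝓡 x
  simp only [zero_apply, add_zero]
  rw [mul_apply_eq_comp, neumann_sub_I_apply 𝓡 hM hreg hu, map_smul,
    cayley_apply 𝓡 hN hregI hu, neumann_add_I_apply 𝓡 hM hreg hu, smul_neg, neg_smul, neg_neg]

theorem cayley_eq_neg_robinToRobin_comp {Θ : Hb →L[ℂ] Hb'} {N : Hb' →L[ℂ] Hb}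
    {R₁ R₂ : Hb' →L[ℂ] Hb'}
    (hN : IsRtD sol γD γN (I • (𝓡 : Hb →L[ℂ] Hb')) N z)
    (hregI : RobinRegular sol γD γN (I • (𝓡 : Hb →L[ℂ] Hb')) z)
    (hregΘ : RobinRegular sol γD γN Θ z)
    (hR₁ : IsRtR sol γD γN Θ (-(I • (𝓡 : Hb →L[ℂ] Hb'))) R₁ z)
    (hR₂ : IsRtR sol γD γN (I • (𝓡 : Hb →L[ℂ] Hb')) Θ R₂ z) :
    (2 * I) • N.comp (𝓡 : Hb →L[ℂ] Hb') - 1 =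
      -((𝓡.symm : Hb' →L[ℂ] Hb).comp ((R₁.comp R₂).comp (𝓡 : Hb →L[ℂ] Hb'))) := by
  ext x
  obtain ⟨u, hu, rfl⟩ := hregI.exists_symm_robinData_eq 𝓡 x
  simp only [cayley_apply 𝓡 hN hregI hu, neg_apply, ContinuousLinearMap.comp_apply,
    ContinuousLinearEquiv.coe_coe, ContinuousLinearEquiv.apply_symm_apply,
    hR₂.apply_robinData hregI hu, hR₁.apply_robinData hregΘ hu]

end

theorem _root_.AnalyticAt.clm_comp_const {𝕜 E F G X : Type*} [NontriviallyNormedField 𝕜]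
    [NormedAddCommGroup E] [NormedSpace 𝕜 E] [NormedAddCommGroup F] [NormedSpace 𝕜 F]
    [NormedAddCommGroup G] [NormedSpace 𝕜 G] [NormedAddCommGroup X] [NormedSpace 𝕜 X]
    {f : X → E →L[𝕜] F} {x : X} (hf : AnalyticAt 𝕜 f x) (g : G →L[𝕜] E) :
    AnalyticAt 𝕜 (fun y => (f y).comp g) x :=
  (((ContinuousLinearMap.compL 𝕜 G E F).flip g).analyticAt _).comp hf

theorem neumann_cayley_eq {sol : ℂ → Set H1} {γD : H1 →ₗ[ℂ] Hb} {γN : H1 →ₗ[ℂ] Hb'} {z : ℂ}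
    (𝓡 : Hb ≃L[ℂ] Hb') {M N : Hb' →L[ℂ] Hb} (hM : IsRtD sol γD γN 0 M z)
    (hreg : RobinRegular sol γD γN 0 z) (hN : IsRtD sol γD γN (I • (𝓡 : Hb →L[ℂ] Hb')) N z)
    (hregI : RobinRegular sol γD γN (I • (𝓡 : Hb →L[ℂ] Hb')) z) :
    (M.comp (𝓡 : Hb →L[ℂ] Hb') + I • (1 : Hb →L[ℂ] Hb)) *
        Ring.inverse (M.comp (𝓡 : Hb →L[ℂ] Hb') - I • (1 : Hb →L[ℂ] Hb)) =
      (2 * I) • N.comp (𝓡 : Hb →L[ℂ] Hb') - 1 := by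
  have hunit : IsUnit (M.comp (𝓡 : Hb →L[ℂ] Hb') - I • (1 : Hb →L[ℂ] Hb)) :=
    ContinuousLinearMap.isUnit_iff_bijective.2 ((bijective_neumann_sub_I_iff 𝓡 hM hreg).2 hregI)
  rw [← cayley_mul_neumann_sub_I 𝓡 hM hreg hN hregI, mul_assoc, Ring.mul_inverse_cancel _ hunit,
    mul_one]

theorem thm_cont_general
    (sol : ℂ → Set H1) (γD : H1 →ₗ[ℂ] Hb) (γN : H1 →ₗ[ℂ] Hb')
    -- the Riesz isomorphism 𝓡 : H^{1/2}(∂Ω) → H^{-1/2}(∂Ω), ⟪𝓡f, g⟫ = ⟨f,g⟩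
    (𝓡 : Hb ≃L[ℂ] Hb')
    -- the Neumann-to-Dirichlet family N = N₀
    (N : ℂ → (Hb' →L[ℂ] Hb))
    (hN : ∀ z, RobinRegular sol γD γN 0 z → IsRtD sol γD γN 0 (N z) z)
    -- the Robin-to-Dirichlet family N_{i𝓡}
    (Ni𝓡 : ℂ → (Hb' →L[ℂ] Hb))
    (hNi𝓡 : ∀ z, RobinRegular sol γD γN (Complex.I • (𝓡 : Hb →L[ℂ] Hb')) z →
      IsRtD sol γD γN (Complex.I • (𝓡 : Hb →L[ℂ] Hb')) (Ni𝓡 z) z)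
    (hNi𝓡ana : ∀ z, RobinRegular sol γD γN (Complex.I • (𝓡 : Hb →L[ℂ] Hb')) z →
      AnalyticAt ℂ Ni𝓡 z)
    -- an arbitrary boundary operator Θ satisfying Hypothesis 4.4, with the
    -- associated Robin-to-Dirichlet and Robin-to-Robin families
    (Θ : Hb →L[ℂ] Hb')
    (NΘ : ℂ → (Hb' →L[ℂ] Hb))
    (hNΘ : ∀ z, RobinRegular sol γD γN Θ z → IsRtD sol γD γN Θ (NΘ z) z)
    (RΘmi : ℂ → (Hb' →L[ℂ] Hb'))   -- R_{Θ, -i𝓡}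
    (hRΘmi : ∀ z, RobinRegular sol γD γN Θ z →
      IsRtR sol γD γN Θ (-(Complex.I • (𝓡 : Hb →L[ℂ] Hb'))) (RΘmi z) z)
    (Ri𝓡Θ : ℂ → (Hb' →L[ℂ] Hb'))   -- R_{i𝓡, Θ}
    (hRi𝓡Θ : ∀ z, RobinRegular sol γD γN (Complex.I • (𝓡 : Hb →L[ℂ] Hb')) z →
      IsRtR sol γD γN (Complex.I • (𝓡 : Hb →L[ℂ] Hb')) Θ (Ri𝓡Θ z) z) :
    -- N(λ)𝓡 - i is invertible iff λ ∈ ρ(𝓛^N) ∩ ρ(𝓛^{i𝓡})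
    (∀ z, RobinRegular sol γD γN 0 z →
      (Function.Bijective
          ((N z).comp (𝓡 : Hb →L[ℂ] Hb') - Complex.I • (1 : Hb →L[ℂ] Hb)) ↔
        RobinRegular sol γD γN (Complex.I • (𝓡 : Hb →L[ℂ] Hb')) z)) ∧
    -- 𝐖₀(λ) = (N(λ)𝓡 + i)(N(λ)𝓡 - i)⁻¹ = 2i N_{i𝓡}(λ)𝓡 - I on ρ(𝓛^N) ∩ ρ(𝓛^{i𝓡})
    (∀ z, RobinRegular sol γD γN 0 z →
      RobinRegular sol γD γN (Complex.I • (𝓡 : Hb →L[ℂ] Hb')) z →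
      ((N z).comp (𝓡 : Hb →L[ℂ] Hb') + Complex.I • (1 : Hb →L[ℂ] Hb)) *
          Ring.inverse
            ((N z).comp (𝓡 : Hb →L[ℂ] Hb') - Complex.I • (1 : Hb →L[ℂ] Hb)) =
        (2 * Complex.I) • ((Ni𝓡 z).comp (𝓡 : Hb →L[ℂ] Hb')) - 1) ∧
    -- hence 𝐖(λ) := 2i N_{i𝓡}(λ)𝓡 - I is analytic on all of ρ(𝓛^{i𝓡})
    (∀ z, RobinRegular sol γD γN (Complex.I • (𝓡 : Hb →L[ℂ] Hb')) z →
      AnalyticAt ℂ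
        (fun w => (2 * Complex.I) • ((Ni𝓡 w).comp (𝓡 : Hb →L[ℂ] Hb')) -
          (1 : Hb →L[ℂ] Hb)) z) ∧
    -- 𝐖(λ) = -𝓡⁻¹ R_{Θ,-i𝓡}(λ) R_{i𝓡,Θ}(λ) 𝓡 = 2i N_Θ(λ) R_{i𝓡,Θ}(λ) 𝓡 - I
    -- for all λ ∈ ρ(𝓛^{i𝓡}) ∩ ρ(𝓛^Θ)
    (∀ z, RobinRegular sol γD γN (Complex.I • (𝓡 : Hb →L[ℂ] Hb')) z →
      RobinRegular sol γD γN Θ z →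
      ((2 * Complex.I) • ((Ni𝓡 z).comp (𝓡 : Hb →L[ℂ] Hb')) - 1 =
        -((𝓡.symm : Hb' →L[ℂ] Hb).comp
            (((RΘmi z).comp (Ri𝓡Θ z)).comp (𝓡 : Hb →L[ℂ] Hb'))) ∧
       (2 * Complex.I) • ((Ni𝓡 z).comp (𝓡 : Hb →L[ℂ] Hb')) - 1 =
        (2 * Complex.I) • ((NΘ z).comp ((Ri𝓡Θ z).comp (𝓡 : Hb →L[ℂ] Hb'))) - 1)) := by
  refine ⟨fun z hz => bijective_neumann_sub_I_iff 𝓡 (hN z hz) hz,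
    fun z hz hzI => neumann_cayley_eq 𝓡 (hN z hz) hz (hNi𝓡 z hzI) hzI,
    fun z hzI => ((hNi𝓡ana z hzI).clm_comp_const _).fun_const_smul.fun_sub analyticAt_const,
    fun z hzI hzΘ => ⟨cayley_eq_neg_robinToRobin_comp 𝓡 (hNi𝓡 z hzI) hzI hzΘ (hRΘmi z hzΘ)
      (hRi𝓡Θ z hzI), ?_⟩⟩
  rw [(hNi𝓡 z hzI).eq_comp_robinToRobin hzI (hNΘ z hzΘ) hzΘ (hRi𝓡Θ z hzI),
    ContinuousLinearMap.comp_assoc]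

/-- **Theorem 7.1.** -/
theorem thm_cont
    (sol : ℂ → Set H1) (γD : H1 →ₗ[ℂ] Hb) (γN : H1 →ₗ[ℂ] Hb')
    (pr : Hb' → Hb → ℂ)
    -- the Riesz isomorphism 𝓡 : H^{1/2}(∂Ω) → H^{-1/2}(∂Ω), ⟪𝓡f, g⟫ = ⟨f,g⟩
    (𝓡 : Hb ≃L[ℂ] Hb')
    (h𝓡 : ∀ f g : Hb, pr (𝓡 f) g = (inner ℂ g f : ℂ))
    -- the Neumann-to-Dirichlet family N = N₀
    (N : ℂ → (Hb' →L[ℂ] Hb))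
    (hN : ∀ z, RobinRegular sol γD γN 0 z → IsRtD sol γD γN 0 (N z) z)
    (hNana : ∀ z, RobinRegular sol γD γN 0 z → AnalyticAt ℂ N z)
    -- the Robin-to-Dirichlet family N_{i𝓡}
    (Ni𝓡 : ℂ → (Hb' →L[ℂ] Hb))
    (hNi𝓡 : ∀ z, RobinRegular sol γD γN (Complex.I • (𝓡 : Hb →L[ℂ] Hb')) z →
      IsRtD sol γD γN (Complex.I • (𝓡 : Hb →L[ℂ] Hb')) (Ni𝓡 z) z)
    (hNi𝓡ana : ∀ z, RobinRegular sol γD γN (Complex.I • (𝓡 : Hb →L[ℂ] Hb')) z →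
      AnalyticAt ℂ Ni𝓡 z)
    -- an arbitrary boundary operator Θ satisfying Hypothesis 4.4, with the
    -- associated Robin-to-Dirichlet and Robin-to-Robin families
    (Θ : Hb →L[ℂ] Hb')
    (NΘ : ℂ → (Hb' →L[ℂ] Hb))
    (hNΘ : ∀ z, RobinRegular sol γD γN Θ z → IsRtD sol γD γN Θ (NΘ z) z)
    (RΘmi : ℂ → (Hb' →L[ℂ] Hb'))   -- R_{Θ, -i𝓡}
    (hRΘmi : ∀ z, RobinRegular sol γD γN Θ z →
      IsRtR sol γD γN Θ (-(Complex.I • (𝓡 : Hb →L[ℂ] Hb'))) (RΘmi z) z)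
    (Ri𝓡Θ : ℂ → (Hb' →L[ℂ] Hb'))   -- R_{i𝓡, Θ}
    (hRi𝓡Θ : ∀ z, RobinRegular sol γD γN (Complex.I • (𝓡 : Hb →L[ℂ] Hb')) z →
      IsRtR sol γD γN (Complex.I • (𝓡 : Hb →L[ℂ] Hb')) Θ (Ri𝓡Θ z) z) :
    -- N(λ)𝓡 - i is invertible iff λ ∈ ρ(𝓛^N) ∩ ρ(𝓛^{i𝓡})
    (∀ z, RobinRegular sol γD γN 0 z →
      (Function.Bijective
          ((N z).comp (𝓡 : Hb →L[ℂ] Hb') - Complex.I • (1 : Hb →L[ℂ] Hb)) ↔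
        RobinRegular sol γD γN (Complex.I • (𝓡 : Hb →L[ℂ] Hb')) z)) ∧
    -- 𝐖₀(λ) = (N(λ)𝓡 + i)(N(λ)𝓡 - i)⁻¹ = 2i N_{i𝓡}(λ)𝓡 - I on ρ(𝓛^N) ∩ ρ(𝓛^{i𝓡})
    (∀ z, RobinRegular sol γD γN 0 z →
      RobinRegular sol γD γN (Complex.I • (𝓡 : Hb →L[ℂ] Hb')) z →
      ((N z).comp (𝓡 : Hb →L[ℂ] Hb') + Complex.I • (1 : Hb →L[ℂ] Hb)) *
          Ring.inverse
            ((N z).comp (𝓡 : Hb →L[ℂ] Hb') - Complex.I • (1 : Hb →L[ℂ] Hb)) =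
        (2 * Complex.I) • ((Ni𝓡 z).comp (𝓡 : Hb →L[ℂ] Hb')) - 1) ∧
    -- hence 𝐖(λ) := 2i N_{i𝓡}(λ)𝓡 - I is analytic on all of ρ(𝓛^{i𝓡})
    (∀ z, RobinRegular sol γD γN (Complex.I • (𝓡 : Hb →L[ℂ] Hb')) z →
      AnalyticAt ℂ
        (fun w => (2 * Complex.I) • ((Ni𝓡 w).comp (𝓡 : Hb →L[ℂ] Hb')) -
          (1 : Hb →L[ℂ] Hb)) z) ∧
    -- 𝐖(λ) = -𝓡⁻¹ R_{Θ,-i𝓡}(λ) R_{i𝓡,Θ}(λ) 𝓡 = 2i N_Θ(λ) R_{i𝓡,Θ}(λ) 𝓡 - I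
    -- for all λ ∈ ρ(𝓛^{i𝓡}) ∩ ρ(𝓛^Θ)
    (∀ z, RobinRegular sol γD γN (Complex.I • (𝓡 : Hb →L[ℂ] Hb')) z →
      RobinRegular sol γD γN Θ z →
      ((2 * Complex.I) • ((Ni𝓡 z).comp (𝓡 : Hb →L[ℂ] Hb')) - 1 =
        -((𝓡.symm : Hb' →L[ℂ] Hb).comp
            (((RΘmi z).comp (Ri𝓡Θ z)).comp (𝓡 : Hb →L[ℂ] Hb'))) ∧
       (2 * Complex.I) • ((Ni𝓡 z).comp (𝓡 : Hb →L[ℂ] Hb')) - 1 =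
        (2 * Complex.I) • ((NΘ z).comp ((Ri𝓡Θ z).comp (𝓡 : Hb →L[ℂ] Hb'))) - 1)) :=
  thm_cont_general sol γD γN 𝓡 N hN Ni𝓡 hNi𝓡 hNi𝓡ana Θ NΘ hNΘ RΘmi hRΘmi Ri𝓡Θ hRi𝓡Θ

end Evans
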